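/- Let L be a symmetric positive semidefinite n×n real matrix with orthonormal eigenbasis e_1,…,e_n ordered by nondecreasing eigenvalues λ_1 ≤ … ≤ λ_n, let f ∈ ℝ^n, and for 1 ≤ k ≤ n with λ_k > 0 let f_k = Σ_{i=1}^{k} ⟨f, e_i⟩ e_i be the truncated spectral reconstruction. Then ‖f − f_k‖_∞ ≤ √(⟨f, L f⟩) / √λ_k. -/

import Mathlib

/-!
Expand `f = ∑ cᵢ eᵢ` with `cᵢ = ⟨f, eᵢ⟩`, so that `⟨f, L f⟩ = ∑ λᵢ cᵢ²` with all `λᵢ ≥ 0`.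
The error `f - f_k` only carries the coefficients with `i ≥ k`, where `λᵢ ≥ λ_k`, hence
`∑_{i ≥ k} cᵢ² ≤ ⟨f, L f⟩ / λ_k`. Each coordinate of `f - f_k` is the pairing of these
coefficients with a segment of a column of the orthogonal matrix `(eᵢ s)`, which has norm at
most one, so Cauchy–Schwarz bounds it by the square root of that sum.
-/

open Matrix Finset

theorem abs_sum_mul_le_sqrt_sum_sq {α : Type*} {S : Finset α} {a b : α → ℝ}
    (hb : ∑ i ∈ S, b i ^ 2 ≤ 1) : |∑ i ∈ S, a i * b i| ≤ √(∑ i ∈ S, a i ^ 2) := by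
  refine Real.abs_le_sqrt ?_
  calc (∑ i ∈ S, a i * b i) ^ 2 ≤ (∑ i ∈ S, a i ^ 2) * ∑ i ∈ S, b i ^ 2 :=
        sum_mul_sq_le_sq_mul_sq S a b
    _ ≤ ∑ i ∈ S, a i ^ 2 := mul_le_of_le_one_right (sum_nonneg fun i _ => sq_nonneg _) hb

theorem sum_sq_le_sum_mul_sq_div {ι : Type*} [Fintype ι] {S : Finset ι} {w c : ι → ℝ} {μ : ℝ}
    (hμ : 0 < μ) (hw : ∀ i, 0 ≤ w i) (hS : ∀ i ∈ S, μ ≤ w i) :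
    ∑ i ∈ S, c i ^ 2 ≤ (∑ i, w i * c i ^ 2) / μ := by
  rw [le_div_iff₀ hμ, sum_mul]
  calc ∑ i ∈ S, c i ^ 2 * μ ≤ ∑ i ∈ S, w i * c i ^ 2 :=
        sum_le_sum fun i hi => by nlinarith [hS i hi, sq_nonneg (c i)]
    _ ≤ ∑ i, w i * c i ^ 2 :=
        sum_le_sum_of_subset_of_nonneg (subset_univ S) fun i _ _ =>
          mul_nonneg (hw i) (sq_nonneg _)

section OrthonormalRows

variable {ι : Type*} [Fintype ι] [DecidableEq ι] {e : ι → ι → ℝ}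

theorem transpose_mul_self_eq_one_of_orthonormal_rows
    (he : ∀ i j, e i ⬝ᵥ e j = if i = j then 1 else 0) :
    (Matrix.of e)ᵀ * Matrix.of e = 1 := by
  refine mul_eq_one_comm.mp ?_
  ext i j
  simpa [Matrix.mul_apply, Matrix.one_apply, dotProduct] using he i j

theorem sum_sq_apply_eq_one_of_orthonormal_rows
    (he : ∀ i j, e i ⬝ᵥ e j = if i = j then 1 else 0) (s : ι) :
    ∑ i, e i s ^ 2 = 1 := by
  simpa [Matrix.mul_apply, sq] using
    congrFun (congrFun (transpose_mul_self_eq_one_of_orthonormal_rows he) s) s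

theorem sum_dotProduct_smul_eq_of_orthonormal_rows
    (he : ∀ i j, e i ⬝ᵥ e j = if i = j then 1 else 0) (f : ι → ℝ) :
    ∑ i, (f ⬝ᵥ e i) • e i = f := by
  have hf : f ᵥ* (Matrix.of e)ᵀ ᵥ* Matrix.of e = f := by
    rw [vecMul_vecMul, transpose_mul_self_eq_one_of_orthonormal_rows he, vecMul_one]
  ext s
  simpa only [vecMul, dotProduct, transpose_apply, of_apply, Finset.sum_apply, Pi.smul_apply,
    smul_eq_mul] using congrFun hf s

theorem sub_sum_filter_dotProduct_smul_eq_of_orthonormal_rows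
    (he : ∀ i j, e i ⬝ᵥ e j = if i = j then 1 else 0) (f : ι → ℝ)
    (p : ι → Prop) [DecidablePred p] :
    f - ∑ i ∈ univ.filter p, (f ⬝ᵥ e i) • e i =
      ∑ i ∈ univ.filter (fun i => ¬ p i), (f ⬝ᵥ e i) • e i := by
  refine sub_eq_of_eq_add' ?_
  rw [sum_filter_add_sum_filter_not, sum_dotProduct_smul_eq_of_orthonormal_rows he]

variable {L : Matrix ι ι ℝ} {lam : ι → ℝ}

theorem eigenvalue_nonneg_of_posSemidef (hL : ∀ f, 0 ≤ f ⬝ᵥ L *ᵥ f)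
    (heig : ∀ i, L *ᵥ e i = lam i • e i)
    (he : ∀ i j, e i ⬝ᵥ e j = if i = j then 1 else 0) (i : ι) : 0 ≤ lam i := by
  simpa [heig i, dotProduct_smul, he i i] using hL (e i)

theorem dotProduct_mulVec_eq_sum_eigenvalue_mul_sq
    (heig : ∀ i, L *ᵥ e i = lam i • e i)
    (he : ∀ i j, e i ⬝ᵥ e j = if i = j then 1 else 0) (f : ι → ℝ) :
    f ⬝ᵥ L *ᵥ f = ∑ i, lam i * (f ⬝ᵥ e i) ^ 2 := by
  have hLf : L *ᵥ f = ∑ i, (f ⬝ᵥ e i * lam i) • e i := by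
    conv_lhs => rw [← sum_dotProduct_smul_eq_of_orthonormal_rows he f]
    simp only [mulVec_sum, mulVec_smul, heig, smul_smul]
  rw [hLf, dotProduct_sum]
  refine sum_congr rfl fun i _ => ?_
  rw [dotProduct_smul, smul_eq_mul]
  ring

end OrthonormalRows

/-- Sup-norm reconstruction bound: for a symmetric PSD matrix `L` with orthonormal
eigenbasis `e` ordered by nondecreasing eigenvalues `lam`, the truncated spectral
reconstruction `f_k = ∑_{i=1}^{k} ⟨f, e_i⟩ e_i` satisfies
`‖f - f_k‖_∞ ≤ √(⟨f, L f⟩) / √(λ_k)` whenever `λ_k > 0`. -/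
theorem truncated_reconstruction_sup_bound
    {n : ℕ} (L : Fin n → Fin n → ℝ)
    (hL_psd : ∀ f : Fin n → ℝ, 0 ≤ ∑ i, f i * ∑ j, L i j * f j)
    (e : Fin n → Fin n → ℝ) (lam : Fin n → ℝ)
    (h_eigen : ∀ i s, ∑ t, L s t * e i t = lam i * e i s)
    (h_ortho : ∀ i j, ∑ s, e i s * e j s = if i = j then (1 : ℝ) else 0)
    (h_mono : Monotone lam)
    (f : Fin n → ℝ)
    (k : ℕ) (hk1 : 1 ≤ k) (hk : k ≤ n)
    (hlamk : 0 < lam ⟨k - 1, by omega⟩)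
    (fk : Fin n → ℝ)
    (hfk : ∀ s, fk s = ∑ i ∈ Finset.univ.filter (fun i : Fin n => (i : ℕ) < k),
        (∑ t, f t * e i t) * e i s) :
    ‖f - fk‖ ≤ Real.sqrt (∑ i, f i * ∑ j, L i j * f j) /
      Real.sqrt (lam ⟨k - 1, by omega⟩) := by
  have heig : ∀ i, Matrix.of L *ᵥ e i = lam i • e i := fun i => funext (h_eigen i)
  have hlam : ∀ i, 0 ≤ lam i := eigenvalue_nonneg_of_posSemidef hL_psd heig h_ortho
  have hfk' : fk = ∑ i ∈ univ.filter (fun i : Fin n => (i : ℕ) < k), (f ⬝ᵥ e i) • e i := by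
    ext s; simp [hfk, Finset.sum_apply, dotProduct]
  rw [pi_norm_le_iff_of_nonneg (by positivity), hfk',
    sub_sum_filter_dotProduct_smul_eq_of_orthonormal_rows h_ortho]
  set tail := univ.filter (fun i : Fin n => ¬ (i : ℕ) < k)
  have htail : ∑ i ∈ tail, (f ⬝ᵥ e i) ^ 2 ≤
      (f ⬝ᵥ Matrix.of L *ᵥ f) / lam ⟨k - 1, by omega⟩ := by
    rw [dotProduct_mulVec_eq_sum_eigenvalue_mul_sq heig h_ortho]
    refine sum_sq_le_sum_mul_sq_div hlamk hlam fun i hi => h_mono ?_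
    simp only [tail, mem_filter, mem_univ, true_and, not_lt] at hi
    exact Fin.mk_le_of_le_val (by omega)
  intro s
  calc ‖(∑ i ∈ tail, (f ⬝ᵥ e i) • e i) s‖ = |∑ i ∈ tail, (f ⬝ᵥ e i) * e i s| := by
        simp [Finset.sum_apply, Real.norm_eq_abs]
    _ ≤ √(∑ i ∈ tail, (f ⬝ᵥ e i) ^ 2) :=
        abs_sum_mul_le_sqrt_sum_sq <|
          (sum_le_sum_of_subset_of_nonneg (subset_univ _) fun i _ _ => sq_nonneg _).trans
            (sum_sq_apply_eq_one_of_orthonormal_rows h_ortho s).le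
    _ ≤ _ := (Real.sqrt_le_sqrt htail).trans_eq (Real.sqrt_div (hL_psd f) _)
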